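/- The kernel of the asymptotic function of E(u) = (1/p)‖Au − b‖_p^p + λ(‖∇₁u‖₀ + ‖∇₂u‖₀) equals the kernel of A, i.e., {u : E_∞(u) = 0} = ker(A). -/

import Mathlib

open Filter Topology

/-- Grouped ℓ⁰ semi-norm: number of grid points where the d-dimensional group is nonzero. -/
noncomputable def l0 {n d : ℕ} (u : Fin n → Fin d → ℝ) : ℝ :=
  Set.ncard {i : Fin n | u i ≠ 0}

/-- The Potts-regularized functional E(u) = (1/p)‖Au − b‖_p^p + λ(‖∇₁u‖₀ + ‖∇₂u‖₀). -/
noncomputable def pottsE {ng d m : ℕ}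
    (A : (Fin ng → Fin d → ℝ) →ₗ[ℝ] (Fin m → ℝ)) (b : Fin m → ℝ)
    (D1 D2 : (Fin ng → Fin d → ℝ) →ₗ[ℝ] (Fin ng → Fin d → ℝ))
    (p lam : ℝ) (u : Fin ng → Fin d → ℝ) : ℝ :=
  (1 / p) * ∑ i, |A u i - b i| ^ p + lam * (l0 (D1 u) + l0 (D2 u))

/-- Asymptotic (recession) function: E_∞(u) = liminf_{u'→u, t→∞} E(tu')/t. -/
noncomputable def pottsEinf {ng d m : ℕ}
    (A : (Fin ng → Fin d → ℝ) →ₗ[ℝ] (Fin m → ℝ)) (b : Fin m → ℝ)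
    (D1 D2 : (Fin ng → Fin d → ℝ) →ₗ[ℝ] (Fin ng → Fin d → ℝ))
    (p lam : ℝ) (u : Fin ng → Fin d → ℝ) : EReal :=
  Filter.liminf
    (fun x : (Fin ng → Fin d → ℝ) × ℝ =>
      ((pottsE A b D1 D2 p lam (x.2 • x.1) / x.2 : ℝ) : EReal))
    ((nhds u) ×ˢ atTop)

/-!
For `p ≥ 1` one has `|x| ^ p ≥ |x| - 1`, so the fidelity term of `E(t • v)` is at least
`(1/p) (t ∑ i, |A v i| - C)` with `C` depending only on `b`, while the regularizer is nonnegative;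
hence `E_∞(u) ≥ (1/p) ∑ i, |A u i|`. Conversely, if `A u = 0` then `E` is constant on the ray
`t • u` (the ℓ⁰ semi-norm is scale invariant), so `E(t • u) / t → 0` and already the liminf
along that ray vanishes.
-/
lemma l0_smul {n d : ℕ} {t : ℝ} (ht : t ≠ 0) (u : Fin n → Fin d → ℝ) :
    l0 (t • u) = l0 u := by
  simp only [l0, Pi.smul_apply, ne_eq, smul_eq_zero, ht, false_or]

lemma l0_nonneg {n d : ℕ} (u : Fin n → Fin d → ℝ) : 0 ≤ l0 u :=
  Nat.cast_nonneg _

lemma Real.sub_one_le_rpow {x p : ℝ} (hx : 0 ≤ x) (hp : 1 ≤ p) : x - 1 ≤ x ^ p := by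
  rcases le_total 1 x with h | h
  · linarith [Real.self_le_rpow_of_one_le h hp]
  · linarith [Real.rpow_nonneg hx p]

section Potts

variable {ng d m : ℕ} (A : (Fin ng → Fin d → ℝ) →ₗ[ℝ] (Fin m → ℝ)) (b : Fin m → ℝ)
  (D1 D2 : (Fin ng → Fin d → ℝ) →ₗ[ℝ] (Fin ng → Fin d → ℝ)) (p lam : ℝ)

lemma pottsE_smul_of_apply_eq_zero {u : Fin ng → Fin d → ℝ} (hu : A u = 0) {t : ℝ}
    (ht : t ≠ 0) : pottsE A b D1 D2 p lam (t • u) = pottsE A b D1 D2 p lam u := by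
  simp only [pottsE, map_smul, hu, smul_zero, l0_smul ht]

lemma pottsEinf_nonpos_of_apply_eq_zero {u : Fin ng → Fin d → ℝ} (hu : A u = 0) :
    pottsEinf A b D1 D2 p lam u ≤ 0 := by
  have hray : Tendsto (fun x : (Fin ng → Fin d → ℝ) × ℝ =>
      ((pottsE A b D1 D2 p lam (x.2 • x.1) / x.2 : ℝ) : EReal))
      ((pure u : Filter (Fin ng → Fin d → ℝ)) ×ˢ atTop) (𝓝 0) := by
    rw [pure_prod, tendsto_map'_iff, ← EReal.coe_zero]
    refine EReal.tendsto_coe.mpr (Tendsto.congr' ?_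
      ((tendsto_const_nhds (x := pottsE A b D1 D2 p lam u)).div_atTop tendsto_id))
    filter_upwards [eventually_ne_atTop 0] with t ht
    simp only [id, pottsE_smul_of_apply_eq_zero A b D1 D2 p lam hu ht]
  calc pottsEinf A b D1 D2 p lam u
      ≤ liminf _ (pure u ×ˢ atTop) :=
        liminf_le_liminf_of_le (prod_mono (pure_le_nhds u) le_rfl)
    _ = 0 := hray.liminf_eq

variable {p lam}

lemma sum_abs_sub_le_pottsE (hp : 1 ≤ p) (hlam : 0 ≤ lam) (w : Fin ng → Fin d → ℝ) :
    (1 / p) * (∑ i, |A w i| - ∑ i, (|b i| + 1)) ≤ pottsE A b D1 D2 p lam w := by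
  have hterm : ∀ i, |A w i| - (|b i| + 1) ≤ |A w i - b i| ^ p := fun i => by
    linarith [abs_sub_abs_le_abs_sub (A w i) (b i),
      Real.sub_one_le_rpow (abs_nonneg (A w i - b i)) hp]
  have hreg : 0 ≤ lam * (l0 (D1 w) + l0 (D2 w)) :=
    mul_nonneg hlam (add_nonneg (l0_nonneg _) (l0_nonneg _))
  rw [← Finset.sum_sub_distrib (fun i => |A w i|)]
  unfold pottsE
  linarith [mul_le_mul_of_nonneg_left (Finset.sum_le_sum (s := Finset.univ) fun i _ => hterm i)
    (one_div_nonneg.mpr (zero_le_one.trans hp))]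

lemma sum_abs_le_pottsEinf (hp : 1 ≤ p) (hlam : 0 ≤ lam) (u : Fin ng → Fin d → ℝ) :
    (((1 / p) * ∑ i, |A u i| : ℝ) : EReal) ≤ pottsEinf A b D1 D2 p lam u := by
  set C := ∑ i, (|b i| + 1)
  let g : (Fin ng → Fin d → ℝ) × ℝ → ℝ := fun x => (1 / p) * (∑ i, |A x.1 i| - C / x.2)
  have hg : Tendsto (fun x => (g x : EReal)) (𝓝 u ×ˢ atTop)
      (𝓝 ((1 / p) * ∑ i, |A u i| : ℝ)) := by
    refine EReal.tendsto_coe.mpr (Tendsto.const_mul _ ?_)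
    rw [← sub_zero (∑ i, |A u i|)]
    refine Tendsto.sub ?_ (tendsto_const_nhds.div_atTop tendsto_snd)
    have hA : Continuous fun v => ∑ i, |A v i| := by
      have := A.continuous_of_finiteDimensional
      fun_prop
    exact (hA.tendsto u).comp tendsto_fst
  have hle : ∀ᶠ x in 𝓝 u ×ˢ atTop,
      (g x : EReal) ≤ ((pottsE A b D1 D2 p lam (x.2 • x.1) / x.2 : ℝ) : EReal) := by
    filter_upwards [(eventually_gt_atTop 0).prod_inr _] with ⟨v, t⟩ (ht : 0 < t)
    refine EReal.coe_le_coe_iff.mpr ((le_div_iff₀ ht).mpr ?_)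
    have hlow := sum_abs_sub_le_pottsE A b D1 D2 hp hlam (t • v)
    simp only [map_smul, Pi.smul_apply, smul_eq_mul, abs_mul, abs_of_pos ht,
      ← Finset.mul_sum] at hlow
    calc g (v, t) * t = (1 / p) * (t * ∑ i, |A v i| - C) := by
          simp only [g]; field_simp
      _ ≤ _ := hlow
  rw [← hg.liminf_eq]
  exact liminf_le_liminf hle

end Potts

/-- The kernel of the asymptotic function of E equals the kernel of A. -/
theorem stmt1 {ng d m : ℕ}
    (A : (Fin ng → Fin d → ℝ) →ₗ[ℝ] (Fin m → ℝ)) (b : Fin m → ℝ)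
    (D1 D2 : (Fin ng → Fin d → ℝ) →ₗ[ℝ] (Fin ng → Fin d → ℝ))
    (p lam : ℝ) (hp : 1 ≤ p) (hlam : 0 < lam) :
    {u : Fin ng → Fin d → ℝ | pottsEinf A b D1 D2 p lam u = 0} =
      {u : Fin ng → Fin d → ℝ | A u = 0} := by
  ext u
  simp only [Set.mem_ofPred_eq]
  have hlower := sum_abs_le_pottsEinf A b D1 D2 hp hlam.le u
  refine ⟨fun h => ?_, fun hu => ?_⟩
  · rw [h, EReal.coe_nonpos] at hlower
    have hsum : ∑ i, |A u i| ≤ 0 :=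
      nonpos_of_mul_nonpos_right hlower (one_div_pos.mpr (zero_lt_one.trans_le hp))
    funext i
    exact abs_eq_zero.mp ((Finset.sum_eq_zero_iff_of_nonneg fun j _ => abs_nonneg _).mp
      (hsum.antisymm (Finset.sum_nonneg fun j _ => abs_nonneg _)) i (Finset.mem_univ i))
  · refine (pottsEinf_nonpos_of_apply_eq_zero A b D1 D2 p lam hu).antisymm ?_
    simpa only [hu, Pi.zero_apply, abs_zero, Finset.sum_const_zero, mul_zero,
      EReal.coe_zero] using hlower
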